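/- Suppose a_1,...,a_n and b_1,...,b_n are two solutions in G of an R-nullhomologous system x_i^e = w_i(x_1,...,x_n). Then the normal subgroup N of G generated by the elements a_i·b_i^{-1} satisfies: the class of each a_i·b_i^{-1} in N/[G,N] has order dividing e; in particular N is R-invisible. -/

import Mathlib

open scoped TensorProduct

/-- The set of denominators of (reduced fractional expressions of) elements of `R ⊆ ℚ`. -/
def DR (R : Subring ℚ) : Set ℕ := {d | ∃ q ∈ R, q.den = d}

variable {G H A : Type*} [Group G] [Group H] [Group A]

/-- Evaluation of a monomial over `G` in `n` indeterminates at a tuple of elements of `G`. -/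
noncomputable def evalWord {n : ℕ} (g : Fin n → G) :
    Monoid.Coprod G (FreeGroup (Fin n)) →* G :=
  Monoid.Coprod.lift (MonoidHom.id G) (FreeGroup.lift g)

/-- The projection `G * F → F → F/[F,F]`. -/
noncomputable def toFreeAb (G : Type*) [Group G] (n : ℕ) :
    Monoid.Coprod G (FreeGroup (Fin n)) →* Abelianization (FreeGroup (Fin n)) :=
  Monoid.Coprod.lift 1 Abelianization.of

/-- An `R`-nullhomologous system of equations `xᵢ^e = wᵢ(x₁,…,xₙ)` over `G`. -/
structure NullSys (R : Subring ℚ) (G : Type*) [Group G] where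
  n : ℕ
  e : ℕ
  he : e ∈ DR R
  w : Fin n → Monoid.Coprod G (FreeGroup (Fin n))
  nullh : ∀ i, toFreeAb G n (w i) = 1

/-- A solution of a system of equations over `G`. -/
def NullSys.IsSolution {R : Subring ℚ} (S : NullSys R G) (g : Fin S.n → G) : Prop :=
  ∀ i, (g i) ^ S.e = evalWord g (S.w i)

/-- A group is `R`-closed if every `R`-nullhomologous system over it has a unique solution. -/
def IsRClosed (R : Subring ℚ) (A : Type*) [Group A] : Prop :=
  ∀ S : NullSys R A, ∃! g : Fin S.n → A, S.IsSolution g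

/-- A normal subgroup `N ≤ G` is `R`-invisible if it is normally finitely generated and every
element of `N/[G,N]` has (finite) order lying in `D_R`. -/
def IsRInvisible (R : Subring ℚ) {G : Type*} [Group G] (N : Subgroup G) : Prop :=
  N.Normal ∧
  (∃ s : Finset G, ↑s ⊆ (N : Set G) ∧ Subgroup.normalClosure ↑s = N) ∧
  ∀ x ∈ N, ∃ e ∈ DR R, x ^ e ∈ ⁅(⊤ : Subgroup G), N⁆

/-!
Write `π : G → Q = G/[G,N]` and `dᵢ = π(aᵢ bᵢ⁻¹)`; these are central in `Q`. Twisting the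
evaluation at `b` by the homomorphism `xᵢ ↦ dᵢ` of `F/[F,F]` into the centre gives a homomorphism
`G * F → Q` that agrees with `π ∘ eval_a` on generators, hence everywhere. On a nullhomologous
word the twist is trivial, so `π(aᵢ)^e = π(wᵢ(a)) = π(wᵢ(b)) = π(bᵢ)^e`, and since `π(aᵢ) = dᵢ π(bᵢ)`
with `dᵢ` central, `dᵢ^e = 1`. The central elements of exponent dividing `e` form a normal
subgroup of `Q` containing every `dᵢ`, so it contains the image of `N`.
-/

section

open Subgroup
open scoped commutatorElement IsMulCommutative

variable {Q : Type*} [Group Q]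

lemma pow_eq_one_of_commute_of_mul_pow_eq_pow {d y : Q} {e : ℕ} (hdy : Commute d y)
    (h : (d * y) ^ e = y ^ e) : d ^ e = 1 := by
  rwa [hdy.mul_pow, mul_eq_right] at h

lemma mk'_commutator_top_mem_center (N : Subgroup G) [N.Normal] {x : G} (hx : x ∈ N) :
    QuotientGroup.mk' ⁅(⊤ : Subgroup G), N⁆ x ∈ center (G ⧸ ⁅(⊤ : Subgroup G), N⁆) := by
  rw [mem_center_iff]
  intro q
  induction q using QuotientGroup.induction_on with
  | _ g =>
    have h : ⁅QuotientGroup.mk' ⁅(⊤ : Subgroup G), N⁆ g,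
        QuotientGroup.mk' ⁅(⊤ : Subgroup G), N⁆ x⁆ = 1 := by
      rw [← map_commutatorElement, QuotientGroup.mk'_apply, QuotientGroup.eq_one_iff]
      exact commutator_mem_commutator (mem_top g) hx
    exact commutatorElement_eq_one_iff_mul_comm.mp h

variable (Q) in
def centerTorsionBy (e : ℕ) : Subgroup Q where
  carrier := {q | q ∈ center Q ∧ q ^ e = 1}
  one_mem' := ⟨one_mem _, one_pow _⟩
  mul_mem' := by
    rintro p q ⟨hp, hpe⟩ ⟨hq, hqe⟩
    refine ⟨mul_mem hp hq, ?_⟩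
    rw [(hp.comm q).mul_pow, hpe, hqe, one_mul]
  inv_mem' := by
    rintro p ⟨hp, hpe⟩
    exact ⟨inv_mem hp, by rw [inv_pow, hpe, inv_one]⟩

instance (e : ℕ) : (centerTorsionBy Q e).Normal where
  conj_mem q hq g := by rwa [(mem_center_iff.mp hq.1 g), mul_inv_cancel_right]

section TwistedEvaluation

variable {n : ℕ}

noncomputable def twistedEvalWord (π : G →* Q) (b : Fin n → G) (z : Fin n → center Q) :
    Monoid.Coprod G (FreeGroup (Fin n)) →* Q where
  toFun w := (Abelianization.lift (FreeGroup.lift z) (toFreeAb G n w) : Q) * π (evalWord b w)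
  map_one' := by simp
  map_mul' v w := by
    have hcomm := mem_center_iff.mp (Abelianization.lift (FreeGroup.lift z) (toFreeAb G n w)).2
      (π (evalWord b v))
    simp only [map_mul, coe_mul, mul_assoc]
    rw [← mul_assoc _ (π (evalWord b v)), ← hcomm, mul_assoc]

lemma comp_evalWord_eq_twistedEvalWord (π : G →* Q) {a b : Fin n → G} {z : Fin n → center Q}
    (hz : ∀ i, π (a i) = z i * π (b i)) :
    π.comp (evalWord a) = twistedEvalWord π b z := by
  apply Monoid.Coprod.hom_ext
  · ext g
    simp [twistedEvalWord, evalWord, toFreeAb]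
  · apply FreeGroup.ext_hom
    intro i
    simp [twistedEvalWord, evalWord, toFreeAb, hz i]

lemma map_evalWord_eq_of_toFreeAb_eq_one (π : G →* Q) {a b : Fin n → G} {z : Fin n → center Q}
    (hz : ∀ i, π (a i) = z i * π (b i)) {w : Monoid.Coprod G (FreeGroup (Fin n))}
    (hw : toFreeAb G n w = 1) : π (evalWord a w) = π (evalWord b w) := by
  have h := DFunLike.congr_fun (comp_evalWord_eq_twistedEvalWord π hz) w
  simpa [twistedEvalWord, hw] using h

end TwistedEvaluation

lemma NullSys.map_mul_inv_pow_eq_one {R : Subring ℚ} (S : NullSys R G) {a b : Fin S.n → G}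
    (ha : S.IsSolution a) (hb : S.IsSolution b) (π : G →* Q)
    (hcentral : ∀ i, π (a i * (b i)⁻¹) ∈ center Q) (i : Fin S.n) :
    π (a i * (b i)⁻¹) ^ S.e = 1 := by
  have hz : ∀ j, π (a j) = π (a j * (b j)⁻¹) * π (b j) := fun j => by
    rw [← map_mul, inv_mul_cancel_right]
  have hpow : π (a i) ^ S.e = π (b i) ^ S.e := by
    rw [← map_pow, ← map_pow, ha i, hb i]
    exact map_evalWord_eq_of_toFreeAb_eq_one π (z := fun j => ⟨_, hcentral j⟩) hz (S.nullh i)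
  rw [hz i] at hpow
  exact pow_eq_one_of_commute_of_mul_pow_eq_pow ((hcentral i).comm _) hpow

end

/-- If `a` and `b` are two solutions of an `R`-nullhomologous system over `G`, then in the
normal subgroup `N` normally generated by the elements `aᵢ bᵢ⁻¹`, the class of each `aᵢ bᵢ⁻¹`
in `N/[G,N]` has order dividing `e`; in particular `N` is `R`-invisible. -/
theorem normal_closure_of_solution_differences_isRInvisible (R : Subring ℚ)
    {G : Type*} [Group G] (S : NullSys R G) (a b : Fin S.n → G)
    (ha : S.IsSolution a) (hb : S.IsSolution b)
    (N : Subgroup G) (hN : N = Subgroup.normalClosure (Set.range fun i => a i * (b i)⁻¹)) :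
    (∀ i, (a i * (b i)⁻¹) ^ S.e ∈ ⁅(⊤ : Subgroup G), N⁆) ∧ IsRInvisible R N := by
  classical
  subst hN
  set N := Subgroup.normalClosure (Set.range fun i => a i * (b i)⁻¹)
  set π := QuotientGroup.mk' ⁅(⊤ : Subgroup G), N⁆
  have hmem : ∀ i, a i * (b i)⁻¹ ∈ N := fun i => Subgroup.subset_normalClosure ⟨i, rfl⟩
  have htorsion : ∀ i, π (a i * (b i)⁻¹) ∈ centerTorsionBy _ S.e := fun i =>
    ⟨mk'_commutator_top_mem_center N (hmem i),
      S.map_mul_inv_pow_eq_one ha hb π (fun j => mk'_commutator_top_mem_center N (hmem j)) i⟩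
  have hN : N ≤ (centerTorsionBy _ S.e).comap π :=
    Subgroup.normalClosure_le_normal (Set.range_subset_iff.mpr htorsion)
  have hpow_mem : ∀ x ∈ N, x ^ S.e ∈ ⁅(⊤ : Subgroup G), N⁆ := fun x hx => by
    rw [← QuotientGroup.eq_one_iff, ← QuotientGroup.mk'_apply, map_pow]
    exact (hN hx).2
  refine ⟨fun i => hpow_mem _ (hmem i), inferInstance,
    ⟨Finset.univ.image fun i => a i * (b i)⁻¹, ?_, ?_⟩, fun x hx => ⟨S.e, S.he, hpow_mem x hx⟩⟩
  · simpa using Set.range_subset_iff.mpr hmem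
  · simp [N]
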